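/- arXiv:2409.19340 — 3 statements merged into one kernel-verified Lean document; each statement's English description precedes it below -/
import Mathlib

section
/- Let $\{X_{k,n}: 1\le k\le n,\ n\ge 1\}$ be an array of random variables such that for each $n$, $X_{1,n},\dots,X_{n,n}$ are independent and identically distributed with $\mathbb{P}(X_{1,n}=i)=p_n(i)$ for $1\le i\le K(n)$. If $K(n)=o(\sqrt{n}\,\sigma_n)$, then $\frac{\sqrt{n}}{\sigma_n}\sum_{i=1}^{K(n)}\hat p_n(i)\ln\frac{\hat p_n(i)}{p_n(i)}$ converges to $0$ in probability as $n\to\infty$. -/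
/-!
The divergence `D = ∑ p̂ log (p̂ / p)` is squeezed between `0` (Gibbs) and the χ²-distance
`∑ p̂² / p - 1` (from `log x ≤ x - 1`). As `n p̂(i)` is a sum of `n` independent Bernoulli(`p(i)`)
variables, `E p̂(i)² ≤ p(i) / n + p(i)²`, so `E χ² ≤ K / n`. Markov's inequality then bounds
`P(√n / σ · D > ε)` by `K / (ε √n σ)`, which tends to `0` by the growth condition.
-/

open MeasureTheory ProbabilityTheory Filter

/-- The empirical distribution `p̂ n(i)(ω) = (1/n) ∑_{j=1}^n 1_{X_{j,n}(ω) = i}` of the array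
`X k n` (`k`-th variable in the `n`-th row). -/
noncomputable def empProb {Ω : Type*} (X : ℕ → ℕ → Ω → ℕ) (n i : ℕ) (ω : Ω) : ℝ :=
  (∑ j ∈ Finset.Icc 1 n, if X j n ω = i then (1 : ℝ) else 0) / n

open Finset Real

lemma sub_le_mul_log_div {q r : ℝ} (hq : 0 ≤ q) (hr : 0 < r) : q - r ≤ q * log (q / r) := by
  rcases hq.eq_or_lt with rfl | hq
  · simpa using hr.le
  · calc q - r = q * (1 - (q / r)⁻¹) := by field_simp
      _ ≤ q * log (q / r) := by gcongr; exact one_sub_inv_le_log_of_pos (by positivity)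

lemma mul_log_div_le_sq_div_sub {q r : ℝ} (hq : 0 ≤ q) (hr : 0 < r) :
    q * log (q / r) ≤ q ^ 2 / r - q := by
  rcases hq.eq_or_lt with rfl | hq
  · simp
  · calc q * log (q / r) ≤ q * (q / r - 1) := by
          gcongr; exact log_le_sub_one_of_pos (by positivity)
      _ = q ^ 2 / r - q := by ring

namespace Finset

variable {ι : Type*} {s : Finset ι} {q r : ι → ℝ}

theorem sum_mul_log_div_nonneg (hq : ∀ i ∈ s, 0 ≤ q i) (hr : ∀ i ∈ s, 0 < r i)
    (hqr : ∑ i ∈ s, q i = ∑ i ∈ s, r i) : 0 ≤ ∑ i ∈ s, q i * log (q i / r i) :=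
  calc 0 = ∑ i ∈ s, (q i - r i) := by rw [sum_sub_distrib, hqr, sub_self]
    _ ≤ _ := sum_le_sum fun i hi => sub_le_mul_log_div (hq i hi) (hr i hi)

theorem sum_mul_log_div_le (hq : ∀ i ∈ s, 0 ≤ q i) (hr : ∀ i ∈ s, 0 < r i) :
    ∑ i ∈ s, q i * log (q i / r i) ≤ ∑ i ∈ s, q i ^ 2 / r i - ∑ i ∈ s, q i := by
  rw [← sum_sub_distrib]
  exact sum_le_sum fun i hi => mul_log_div_le_sq_div_sub (hq i hi) (hr i hi)

end Finset

section Moments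

variable {Ω ι : Type*} [MeasurableSpace Ω] {μ : Measure Ω}

theorem integral_sq_sum_le_of_pairwise_indepFun [IsProbabilityMeasure μ] {Z : ι → Ω → ℝ}
    {s : Finset ι} {m v : ℝ} (hZ : ∀ j ∈ s, MemLp (Z j) 2 μ)
    (hind : Set.Pairwise ↑s fun j k => Z j ⟂ᵢ[μ] Z k)
    (hmean : ∀ j ∈ s, μ[Z j] = m) (hsq : ∀ j ∈ s, μ[Z j ^ 2] ≤ v) :
    μ[(∑ j ∈ s, Z j) ^ 2] ≤ #s * v + (#s * m) ^ 2 := by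
  have hvar : Var[∑ j ∈ s, Z j; μ] ≤ #s * v := calc
    _ = ∑ j ∈ s, Var[Z j; μ] := IndepFun.variance_sum hZ hind
    _ ≤ ∑ j ∈ s, v :=
      sum_le_sum fun j hj => (variance_le_expectation_sq (hZ j hj).1).trans (hsq j hj)
    _ = #s * v := by simp
  have hmeanS : μ[∑ j ∈ s, Z j] = #s * m := by
    simp_rw [Finset.sum_apply]
    rw [integral_finsetSum s fun j hj => (hZ j hj).integrable one_le_two, sum_congr rfl hmean]
    simp
  rw [variance_eq_sub (memLp_finsetSum' s hZ), hmeanS] at hvar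
  linarith

theorem integral_sq_sum_indicator_le [IsProbabilityMeasure μ] {β : Type*} [MeasurableSpace β]
    {Y : ι → Ω → β} {s : Finset ι} {B : Set β} {q : ℝ} (hB : MeasurableSet B)
    (hY : ∀ j ∈ s, Measurable (Y j)) (hind : Set.Pairwise ↑s fun j k => Y j ⟂ᵢ[μ] Y k)
    (hq : ∀ j ∈ s, μ.real (Y j ⁻¹' B) = q) :
    μ[(∑ j ∈ s, B.indicator 1 ∘ Y j) ^ 2] ≤ #s * q + (#s * q) ^ 2 := by
  have hind_meas : Measurable (B.indicator (1 : β → ℝ)) := measurable_one.indicator hB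
  have hcomp : ∀ j, B.indicator 1 ∘ Y j = (Y j ⁻¹' B).indicator (1 : Ω → ℝ) := fun j => by
    ext ω; by_cases h : Y j ω ∈ B <;> simp [h]
  have hmean : ∀ j ∈ s, μ[B.indicator 1 ∘ Y j] = q := fun j hj => by
    rw [hcomp, integral_indicator_one (hY j hj hB), hq j hj]
  have hsq : ∀ j, (B.indicator 1 ∘ Y j) ^ 2 = B.indicator (1 : β → ℝ) ∘ Y j := fun j => by
    ext ω; by_cases h : Y j ω ∈ B <;> simp [h]
  refine integral_sq_sum_le_of_pairwise_indepFun (fun j hj => ?_)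
    (fun j hj k hk hjk => (hind hj hk hjk).comp hind_meas hind_meas) hmean
    (fun j hj => (hsq j ▸ hmean j hj).le)
  rw [hcomp]
  exact ((memLp_const (1 : ℝ)).indicator (hY j hj hB))

end Moments

section EmpiricalDistribution

variable {Ω : Type*} {X : ℕ → ℕ → Ω → ℕ} {n i K : ℕ} {ω : Ω}

lemma empProb_nonneg : 0 ≤ empProb X n i ω := by
  unfold empProb; positivity

lemma empProb_le_one : empProb X n i ω ≤ 1 := by
  unfold empProb
  rcases n.eq_zero_or_pos with rfl | hn
  · simp
  rw [div_le_one (by positivity)]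
  calc _ ≤ ∑ j ∈ Icc 1 n, (1 : ℝ) := sum_le_sum fun j _ => by split_ifs <;> norm_num
    _ = n := by simp

lemma sum_empProb_eq_one (hn : n ≠ 0) (hrange : ∀ j ∈ Icc 1 n, X j n ω ∈ Icc 1 K) :
    ∑ i ∈ Icc 1 K, empProb X n i ω = 1 := by
  unfold empProb
  have hone : ∀ j ∈ Icc 1 n, ∑ i ∈ Icc 1 K, (if X j n ω = i then (1 : ℝ) else 0) = 1 :=
    fun j hj => by simp [hrange j hj]
  rw [← sum_div, sum_comm, sum_congr rfl hone]
  simp [hn]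

lemma empProb_eq_sum_indicator : empProb X n i =
    fun ω => (∑ k : Fin n, ({i} : Set ℕ).indicator (1 : ℕ → ℝ) ∘ X (k + 1) n) ω / n := by
  ext ω
  rw [empProb, Finset.sum_apply, Fin.sum_univ_eq_sum_range
    (fun k => (({i} : Set ℕ).indicator 1 ∘ X (k + 1) n) ω), range_eq_Ico,
    sum_Ico_add' (fun j => (({i} : Set ℕ).indicator 1 ∘ X j n) ω), zero_add,
    Ico_add_one_right_eq_Icc]
  congr 1
  exact sum_congr rfl fun j _ => by simp [Pi.single_apply]

variable [MeasurableSpace Ω]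

lemma measurable_empProb (hmeas : ∀ k, Measurable (X k n)) : Measurable (empProb X n i) := by
  unfold empProb
  refine Measurable.div_const (Finset.measurable_sum _ fun j _ => ?_) _
  exact Measurable.ite (hmeas j (measurableSet_singleton i)) measurable_const measurable_const

lemma memLp_empProb {μ : Measure Ω} [IsFiniteMeasure μ] {p : ENNReal}
    (hmeas : ∀ k, Measurable (X k n)) : MemLp (empProb X n i) p μ :=
  MemLp.of_bound (measurable_empProb hmeas).aestronglyMeasurable 1 (ae_of_all _ fun _ =>
    Real.norm_eq_abs _ ▸ abs_le.2 ⟨(neg_nonpos.2 zero_le_one).trans empProb_nonneg, empProb_le_one⟩)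

lemma integral_empProb_sq_le {μ : Measure Ω} [IsProbabilityMeasure μ] (hn : n ≠ 0)
    (hmeas : ∀ k, Measurable (X k n)) {q : ℝ} (hq : 0 ≤ q)
    (hdist : ∀ k ∈ Icc 1 n, μ {ω | X k n ω = i} = ENNReal.ofReal q)
    (hindep : iIndepFun (fun k : Fin n => X (k.1 + 1) n) μ) :
    ∫ ω, empProb X n i ω ^ 2 ∂μ ≤ q / n + q ^ 2 := by
  have hcount := integral_sq_sum_indicator_le (μ := μ) (s := univ) (q := q)
    (measurableSet_singleton i) (fun k _ => hmeas _) (fun j _ k _ hjk => hindep.indepFun hjk)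
    (fun k _ => by
      rw [measureReal_def, ← ENNReal.toReal_ofReal hq]
      exact congrArg ENNReal.toReal (hdist _ (mem_Icc.2 ⟨by omega, k.isLt⟩)))
  rw [card_univ, Fintype.card_fin] at hcount
  calc ∫ ω, empProb X n i ω ^ 2 ∂μ
      = μ[(∑ k : Fin n, ({i} : Set ℕ).indicator 1 ∘ X (k + 1) n) ^ 2] / n ^ 2 := by
        rw [← integral_div, empProb_eq_sum_indicator]; simp only [div_pow, Pi.pow_apply]
    _ ≤ (n * q + (n * q) ^ 2) / n ^ 2 := by gcongr
    _ = q / n + q ^ 2 := by field_simp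

end EmpiricalDistribution

theorem measureReal_lt_le_integral_div {Ω : Type*} [MeasurableSpace Ω] {μ : Measure Ω}
    [IsFiniteMeasure μ] {f g : Ω → ℝ} (hf : 0 ≤ f) (hfg : f ≤ g) (hg : Integrable g μ)
    {c : ℝ} (hc : 0 < c) : μ.real {ω | c < f ω} ≤ (∫ ω, g ω ∂μ) / c := by
  rw [le_div_iff₀' hc]
  calc c * μ.real {ω | c < f ω} ≤ c * μ.real {ω | c ≤ g ω} :=
      mul_le_mul_of_nonneg_left
        (measureReal_mono fun ω (hω : c < f ω) => hω.le.trans (hfg ω)) hc.le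
    _ ≤ ∫ ω, g ω ∂μ :=
      mul_meas_ge_le_integral_of_nonneg (ae_of_all _ fun ω => (hf ω).trans (hfg ω)) hg c

section Row

variable {Ω : Type*} [MeasurableSpace Ω] {μ : Measure Ω} [IsProbabilityMeasure μ]
  {X : ℕ → ℕ → Ω → ℕ} {q : ℕ → ℝ} {n K : ℕ}

theorem integral_chiSq_empProb_le (hn : n ≠ 0) (hmeas : ∀ k, Measurable (X k n))
    (hq : ∀ i ∈ Icc 1 K, 0 < q i) (hqsum : ∑ i ∈ Icc 1 K, q i = 1)
    (hdist : ∀ k ∈ Icc 1 n, ∀ i ∈ Icc 1 K, μ {ω | X k n ω = i} = ENNReal.ofReal (q i))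
    (hindep : iIndepFun (fun k : Fin n => X (k.1 + 1) n) μ) :
    ∫ ω, (∑ i ∈ Icc 1 K, empProb X n i ω ^ 2 / q i - 1) ∂μ ≤ K / n := by
  have hint : ∀ i ∈ Icc 1 K, Integrable (fun ω => empProb X n i ω ^ 2 / q i) μ :=
    fun i _ => (memLp_empProb hmeas).integrable_sq.div_const _
  rw [integral_sub (integrable_finsetSum _ hint) (integrable_const 1), integral_finsetSum _ hint]
  simp only [integral_div, integral_const, probReal_univ, smul_eq_mul, mul_one]
  calc ∑ i ∈ Icc 1 K, (∫ ω, empProb X n i ω ^ 2 ∂μ) / q i - 1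
      ≤ ∑ i ∈ Icc 1 K, (1 / n + q i) - 1 := by
        gcongr with i hi
        rw [div_le_iff₀ (hq i hi)]
        calc _ ≤ q i / n + q i ^ 2 :=
              integral_empProb_sq_le hn hmeas (hq i hi).le (fun k hk => hdist k hk i hi) hindep
          _ = (1 / n + q i) * q i := by ring
    _ = K / n := by rw [sum_add_distrib, hqsum]; simp; ring

theorem measureReal_lt_abs_mul_kl_empProb_le (hn : n ≠ 0) (hmeas : ∀ k, Measurable (X k n))
    (hq : ∀ i ∈ Icc 1 K, 0 < q i) (hqsum : ∑ i ∈ Icc 1 K, q i = 1)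
    (hrange : ∀ k ∈ Icc 1 n, ∀ ω, X k n ω ∈ Icc 1 K)
    (hdist : ∀ k ∈ Icc 1 n, ∀ i ∈ Icc 1 K, μ {ω | X k n ω = i} = ENNReal.ofReal (q i))
    (hindep : iIndepFun (fun k : Fin n => X (k.1 + 1) n) μ) {a ε : ℝ} (ha : 0 < a)
    (hε : 0 < ε) :
    μ.real {ω | ε < |a * ∑ i ∈ Icc 1 K, empProb X n i ω * log (empProb X n i ω / q i)|}
      ≤ a * K / (ε * n) := by
  set D := fun ω => ∑ i ∈ Icc 1 K, empProb X n i ω * log (empProb X n i ω / q i)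
  set χsq := fun ω => ∑ i ∈ Icc 1 K, empProb X n i ω ^ 2 / q i - 1
  have hD_nonneg : 0 ≤ D := fun ω => sum_mul_log_div_nonneg (fun i _ => empProb_nonneg) hq
    (by rw [sum_empProb_eq_one hn fun k hk => hrange k hk ω, hqsum])
  have hD_le : D ≤ χsq := fun ω => (sum_mul_log_div_le (fun i _ => empProb_nonneg) hq).trans_eq
    (by rw [sum_empProb_eq_one hn fun k hk => hrange k hk ω])
  have hχsq : Integrable χsq μ := (integrable_finsetSum _ fun i _ =>
    (memLp_empProb hmeas).integrable_sq.div_const _).sub (integrable_const 1)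
  have hset : {ω | ε < |a * D ω|} = {ω | ε / a < D ω} := by
    ext ω
    simp only [Set.mem_ofPred_eq, abs_of_nonneg (mul_nonneg ha.le (hD_nonneg ω)),
      div_lt_iff₀' ha]
  calc μ.real {ω | ε < |a * D ω|} = μ.real {ω | ε / a < D ω} := by rw [hset]
    _ ≤ (∫ ω, χsq ω ∂μ) / (ε / a) :=
      measureReal_lt_le_integral_div hD_nonneg hD_le hχsq (by positivity)
    _ ≤ (K / n) / (ε / a) := by
      gcongr; exact integral_chiSq_empProb_le hn hmeas hq hqsum hdist hindep
    _ = a * K / (ε * n) := by field_simp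

end Row

theorem kl_term_tendsto_zero_in_probability_general
    {Ω : Type*} [MeasurableSpace Ω] (μ : Measure Ω) [IsProbabilityMeasure μ]
    (X : ℕ → ℕ → Ω → ℕ) (p : ℕ → ℕ → ℝ) (K : ℕ → ℕ) (σ : ℕ → ℝ)
    (hmeas : ∀ k n, Measurable (X k n))
    -- each `p n` is a probability distribution on `{1, …, K n}` with positive masses
    (hpos : ∀ n ≥ 1, ∀ i ∈ Finset.Icc 1 (K n), 0 < p n i)
    (hsum : ∀ n ≥ 1, ∑ i ∈ Finset.Icc 1 (K n), p n i = 1)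
    -- `X 1 n, …, X n n` take values in the alphabet, have common distribution `p n`,
    -- and are independent
    (hrange : ∀ n ≥ 1, ∀ k ∈ Finset.Icc 1 n, ∀ ω, X k n ω ∈ Finset.Icc 1 (K n))
    (hdist : ∀ n ≥ 1, ∀ k ∈ Finset.Icc 1 n, ∀ i ∈ Finset.Icc 1 (K n),
      μ {ω | X k n ω = i} = ENNReal.ofReal (p n i))
    (hindep : ∀ n ≥ 1, iIndepFun
      (fun k : Fin n => X (k.1 + 1) n) μ)
    -- `σ n` is the standard deviation of `ln p_n(X_{1,n})`, assumed positive
    (hσpos : ∀ n ≥ 1, 0 < σ n)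
    -- the growth condition `K n = o(√n σ_n)`
    (hKo : (fun n : ℕ => (K n : ℝ)) =o[atTop] (fun n : ℕ => Real.sqrt (n : ℝ) * σ n)) :
    ∀ ε : ℝ, 0 < ε →
      Tendsto (fun n : ℕ =>
        (μ {ω | ε < |Real.sqrt (n : ℝ) / σ n *
            ∑ i ∈ Finset.Icc 1 (K n),
              empProb X n i ω * Real.log (empProb X n i ω / p n i)|}).toReal)
        atTop (nhds 0) := by
  intro ε hε
  have hbound : ∀ᶠ n : ℕ in atTop, (μ {ω | ε < |√(n : ℝ) / σ n *
      ∑ i ∈ Icc 1 (K n), empProb X n i ω * log (empProb X n i ω / p n i)|}).toReal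
        ≤ ε⁻¹ * (K n / (√(n : ℝ) * σ n)) := by
    filter_upwards [eventually_ge_atTop 1] with n hn
    have hσ := hσpos n hn
    calc _ ≤ √(n : ℝ) / σ n * K n / (ε * n) :=
          measureReal_lt_abs_mul_kl_empProb_le (by omega) (fun k => hmeas k n) (hpos n hn)
            (hsum n hn) (hrange n hn) (hdist n hn) (hindep n hn) (by positivity) hε
      _ = ε⁻¹ * (K n / (√(n : ℝ) * σ n)) := by
          field_simp
          rw [sq_sqrt (Nat.cast_nonneg n), mul_comm]
  refine squeeze_zero' (Eventually.of_forall fun n => ENNReal.toReal_nonneg) hbound ?_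
  simpa using hKo.tendsto_div_nhds_zero.const_mul ε⁻¹

/-- If `K n = o(√n σ_n)`, then `(√n/σ_n) ∑_i p̂_n(i) ln(p̂_n(i)/p_n(i))` converges to `0` in
probability (terms with `p̂_n(i) = 0` vanish, automatic since `Real.log 0 = 0` in Lean). -/
theorem kl_term_tendsto_zero_in_probability
    {Ω : Type*} [MeasurableSpace Ω] (μ : Measure Ω) [IsProbabilityMeasure μ]
    (X : ℕ → ℕ → Ω → ℕ) (p : ℕ → ℕ → ℝ) (K : ℕ → ℕ) (σ : ℕ → ℝ)
    (hmeas : ∀ k n, Measurable (X k n))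
    -- each `p n` is a probability distribution on `{1, …, K n}` with positive masses
    (hpos : ∀ n ≥ 1, ∀ i ∈ Finset.Icc 1 (K n), 0 < p n i)
    (hsum : ∀ n ≥ 1, ∑ i ∈ Finset.Icc 1 (K n), p n i = 1)
    -- `X 1 n, …, X n n` take values in the alphabet, have common distribution `p n`,
    -- and are independent
    (hrange : ∀ n ≥ 1, ∀ k ∈ Finset.Icc 1 n, ∀ ω, X k n ω ∈ Finset.Icc 1 (K n))
    (hdist : ∀ n ≥ 1, ∀ k ∈ Finset.Icc 1 n, ∀ i ∈ Finset.Icc 1 (K n),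
      μ {ω | X k n ω = i} = ENNReal.ofReal (p n i))
    (hindep : ∀ n ≥ 1, iIndepFun
      (fun k : Fin n => X (k.1 + 1) n) μ)
    -- `σ n` is the standard deviation of `ln p_n(X_{1,n})`, assumed positive
    (hσpos : ∀ n ≥ 1, 0 < σ n)
    (hσdef : ∀ n ≥ 1, σ n ^ 2
      = ∑ i ∈ Finset.Icc 1 (K n), p n i * (Real.log (p n i)) ^ 2
        - (∑ i ∈ Finset.Icc 1 (K n), p n i * Real.log (p n i)) ^ 2)
    -- the growth condition `K n = o(√n σ_n)`
    (hKo : (fun n : ℕ => (K n : ℝ)) =o[atTop] (fun n : ℕ => Real.sqrt (n : ℝ) * σ n)) :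
    ∀ ε : ℝ, 0 < ε →
      Tendsto (fun n : ℕ =>
        (μ {ω | ε < |Real.sqrt (n : ℝ) / σ n *
            ∑ i ∈ Finset.Icc 1 (K n),
              empProb X n i ω * Real.log (empProb X n i ω / p n i)|}).toReal)
        atTop (nhds 0) :=
  kl_term_tendsto_zero_in_probability_general μ X p K σ hmeas hpos hsum hrange hdist hindep hσpos
    hKo
end

section
/- For each integer $K\ge 2$, let $C_K=\sum_{i=1}^{K}\frac{1}{i}$ and consider the Zipf distribution $p_K(i)=(C_K i)^{-1}$ for $1\le i\le K$. Then the variance $\sigma_K^2 = \sum_{i=1}^{K}p_K(i)\ln^2 p_K(i)-\big(\sum_{i=1}^{K}p_K(i)\ln p_K(i)\big)^2$ satisfies $\sigma_K^2 \sim \frac{1}{12}(\ln K)^2$ as $K\to\infty$, i.e. $\lim_{K\to\infty}\sigma_K^2/(\ln K)^2 = 1/12$. -/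
/-!
Shifting `ln p_K(i) = -ln C_K - ln i` by the constant `ln C_K` does not change the variance,
so `σ_K² = A₂/C_K - (A₁/C_K)²` with `A_m = logPowHarmonic m K = ∑_{i ≤ K} (ln i)^m / i` and
`C_K = A₀`. Past `e^m` the summand `(ln x)^m / x` decreases, so the integral test against its
antiderivative `(ln x)^(m+1)/(m+1)` gives `A_m = (ln K)^(m+1)/(m+1) + O(1)`. Hence
`σ_K²/(ln K)² → 1/3 - (1/2)² = 1/12`.
-/

open Filter

/-- The harmonic normalizing constant `C_K = ∑_{i=1}^K 1/i`. -/
noncomputable def harmonicC (K : ℕ) : ℝ := ∑ i ∈ Finset.Icc 1 K, (1 : ℝ) / i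

/-- The Zipf distribution `p_K(i) = (C_K i)⁻¹`, `1 ≤ i ≤ K`. -/
noncomputable def zipfP (K i : ℕ) : ℝ := (harmonicC K * i)⁻¹

/-- The variance parameter `σ_K² = ∑_i p_K(i) ln² p_K(i) − (∑_i p_K(i) ln p_K(i))²` of the
Zipf distribution. -/
noncomputable def zipfVar (K : ℕ) : ℝ :=
  ∑ i ∈ Finset.Icc 1 K, zipfP K i * (Real.log (zipfP K i)) ^ 2
    - (∑ i ∈ Finset.Icc 1 K, zipfP K i * Real.log (zipfP K i)) ^ 2

open Real Finset Asymptotics Topology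

theorem AntitoneOn.abs_sum_Ioc_sub_le {f F : ℝ → ℝ} {N K : ℕ} (hNK : N ≤ K)
    (hf : AntitoneOn f (Set.Icc (N : ℝ) K)) (hF : ∀ x ∈ Set.Icc (N : ℝ) K, HasDerivAt F (f x) x) :
    |∑ i ∈ Ioc N K, f i - (F K - F N)| ≤ f N - f K := by
  have hNK' : (N : ℝ) ≤ K := by exact_mod_cast hNK
  have hint : ∫ x in (N : ℝ)..K, f x = F K - F N := by
    rw [← Set.uIcc_of_le hNK'] at hf hF
    exact intervalIntegral.integral_eq_sub_of_hasDerivAt hF hf.intervalIntegrable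
  have hupper := hf.sum_le_integral_Ico hNK
  have hlower := hf.integral_le_sum_Ico hNK
  rw [sum_Ico_add' (fun i : ℕ => f i), Ico_add_one_add_one_eq_Ioc] at hupper
  have hsplit := (add_sum_Ioc_eq_sum_Icc (f := fun i : ℕ => f i) hNK).trans
    (sum_Ico_add_eq_sum_Icc hNK).symm
  rw [abs_sub_le_iff]
  constructor <;> linarith

theorem Real.hasDerivAt_log_pow_succ_div (m : ℕ) {x : ℝ} (hx : x ≠ 0) :
    HasDerivAt (fun y => log y ^ (m + 1) / (m + 1)) (log x ^ m / x) x := by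
  refine (((hasDerivAt_log hx).fun_pow (m + 1)).div_const ((m : ℝ) + 1)).congr_deriv ?_
  field_simp
  push_cast
  ring

theorem Real.hasDerivAt_log_pow_div_self (m : ℕ) {x : ℝ} (hx : x ≠ 0) :
    HasDerivAt (fun y => log y ^ m / y) ((m * log x ^ (m - 1) - log x ^ m) / x ^ 2) x := by
  refine (((hasDerivAt_log hx).fun_pow m).fun_div (hasDerivAt_id' x) hx).congr_deriv ?_
  field_simp

theorem Real.antitoneOn_log_pow_div_self (m : ℕ) :
    AntitoneOn (fun x => log x ^ m / x) (Set.Ici (exp m)) := by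
  have hpos : ∀ x ∈ Set.Ici (exp m), 0 < x := fun x hx => (exp_pos _).trans_le hx
  have hderiv : ∀ x ∈ Set.Ici (exp m),
      HasDerivAt (fun y => log y ^ m / y) ((m * log x ^ (m - 1) - log x ^ m) / x ^ 2) x :=
    fun x hx => hasDerivAt_log_pow_div_self m (hpos x hx).ne'
  refine antitoneOn_of_deriv_nonpos (convex_Ici _)
    (fun x hx => (hderiv x hx).continuousAt.continuousWithinAt)
    (fun x hx => (hderiv x (interior_subset hx)).differentiableAt.differentiableWithinAt)
    fun x hx => ?_
  rw [(hderiv x (interior_subset hx)).deriv]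
  rw [interior_Ici] at hx
  have hlog : m ≤ log x := (le_log_iff_exp_le (hpos x (Set.mem_Ici.mpr hx.le))).mpr hx.le
  refine div_nonpos_of_nonpos_of_nonneg (sub_nonpos.mpr ?_) (sq_nonneg x)
  cases m with
  | zero => simp
  | succ k =>
    rw [Nat.add_sub_cancel, pow_succ, mul_comm]
    exact mul_le_mul_of_nonneg_left hlog (pow_nonneg ((Nat.cast_nonneg _).trans hlog) k)

noncomputable def logPowHarmonic (m K : ℕ) : ℝ := ∑ i ∈ Icc 1 K, log i ^ m / i

theorem isBigO_logPowHarmonic_sub (m : ℕ) :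
    (fun K : ℕ => logPowHarmonic m K - log K ^ (m + 1) / (m + 1)) =O[atTop] fun _ => (1 : ℝ) := by
  set f : ℝ → ℝ := fun x => log x ^ m / x
  set F : ℝ → ℝ := fun x => log x ^ (m + 1) / (m + 1)
  set N := ⌈exp m⌉₊
  have hf : AntitoneOn f (Set.Ici (N : ℝ)) :=
    (antitoneOn_log_pow_div_self m).mono (Set.Ici_subset_Ici.mpr (Nat.le_ceil _))
  have hN : (0 : ℝ) < N := (exp_pos _).trans_le (Nat.le_ceil _)
  refine IsBigO.of_bound (|logPowHarmonic m N - F N| + f N) ?_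
  filter_upwards [eventually_ge_atTop N] with K hK
  have hsplit : logPowHarmonic m K = logPowHarmonic m N + ∑ i ∈ Ioc N K, f i := by
    have hIcc : ∀ n : ℕ, Icc 1 n = Ioc 0 n := Icc_add_one_left_eq_Ioc 0
    rw [logPowHarmonic, logPowHarmonic, hIcc, hIcc, ← sum_Ioc_consecutive _ N.zero_le hK]
  have htail := (hf.mono Set.Icc_subset_Ici_self).abs_sum_Ioc_sub_le hK (F := F) fun x hx =>
    hasDerivAt_log_pow_succ_div m (hN.trans_le hx.1).ne'
  have hfK : 0 ≤ f K := div_nonneg (pow_nonneg (log_natCast_nonneg K) m) (Nat.cast_nonneg K)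
  rw [norm_one, mul_one, norm_eq_abs]
  calc |logPowHarmonic m K - F K|
      = |(logPowHarmonic m N - F N) + (∑ i ∈ Ioc N K, f i - (F K - F N))| := by
        rw [hsplit]; ring_nf
    _ ≤ |logPowHarmonic m N - F N| + (f N - f K) := (abs_add_le _ _).trans (by gcongr)
    _ ≤ |logPowHarmonic m N - F N| + f N := by linarith

theorem tendsto_logPowHarmonic_div_log_pow (m : ℕ) :
    Tendsto (fun K : ℕ => logPowHarmonic m K / log K ^ (m + 1)) atTop (𝓝 (1 / (m + 1))) := by
  have hlog : Tendsto (fun K : ℕ => log K ^ (m + 1)) atTop atTop :=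
    (tendsto_pow_atTop m.succ_ne_zero).comp (tendsto_log_atTop.comp tendsto_natCast_atTop_atTop)
  have herror := ((isBigO_logPowHarmonic_sub m).trans_isLittleO
    ((isLittleO_one_left_iff ℝ).mpr (tendsto_norm_atTop_atTop.comp hlog))).tendsto_div_nhds_zero
  have hlim := herror.add_const (1 / ((m : ℝ) + 1))
  rw [zero_add] at hlim
  refine hlim.congr' ?_
  filter_upwards [eventually_gt_atTop 1] with K hK
  have : log K ≠ 0 := (log_pos (by exact_mod_cast hK)).ne'
  field_simp
  ring

noncomputable def weightedVariance {ι : Type*} (s : Finset ι) (p f : ι → ℝ) : ℝ :=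
  ∑ i ∈ s, p i * f i ^ 2 - (∑ i ∈ s, p i * f i) ^ 2

theorem weightedVariance_const_sub {ι : Type*} {s : Finset ι} {p : ι → ℝ}
    (hp : ∑ i ∈ s, p i = 1) (c : ℝ) (f : ι → ℝ) :
    weightedVariance s p (fun i => c - f i) = weightedVariance s p f := by
  have hconst : ∀ a : ℝ, ∑ i ∈ s, p i * a = a := fun a => by rw [← sum_mul, hp, one_mul]
  have hlin : ∑ i ∈ s, p i * (2 * c * f i) = 2 * c * ∑ i ∈ s, p i * f i := by
    rw [mul_sum]
    exact sum_congr rfl fun i _ => by ring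
  simp only [weightedVariance, sub_sq, mul_add, mul_sub, sum_add_distrib, sum_sub_distrib,
    hconst, hlin]
  ring

theorem sum_zipfP_mul (K : ℕ) (g : ℕ → ℝ) :
    ∑ i ∈ Icc 1 K, zipfP K i * g i = (∑ i ∈ Icc 1 K, g i / i) / harmonicC K := by
  simp only [zipfP, sum_div]
  refine sum_congr rfl fun i _ => ?_
  rw [mul_inv]
  ring

theorem harmonicC_pos {K : ℕ} (hK : 1 ≤ K) : 0 < harmonicC K :=
  sum_pos (fun i hi => by have := (mem_Icc.mp hi).1; positivity) ⟨1, mem_Icc.mpr ⟨le_rfl, hK⟩⟩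

theorem sum_zipfP {K : ℕ} (hK : 1 ≤ K) : ∑ i ∈ Icc 1 K, zipfP K i = 1 := by
  have h := sum_zipfP_mul K 1
  simp only [Pi.one_apply, mul_one] at h
  rw [h]
  exact div_self (harmonicC_pos hK).ne'

theorem harmonicC_eq_logPowHarmonic_zero (K : ℕ) : harmonicC K = logPowHarmonic 0 K := by
  simp [harmonicC, logPowHarmonic]

theorem zipfVar_eq_logPowHarmonic {K : ℕ} (hK : 1 ≤ K) :
    zipfVar K = logPowHarmonic 2 K / harmonicC K - (logPowHarmonic 1 K / harmonicC K) ^ 2 := by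
  have hlog : ∀ i ∈ Icc 1 K, log (zipfP K i) = -log (harmonicC K) - log i := fun i hi => by
    have : (i : ℝ) ≠ 0 := by have := (mem_Icc.mp hi).1; positivity
    rw [zipfP, log_inv, log_mul (harmonicC_pos hK).ne' this]
    ring
  calc zipfVar K
      = weightedVariance (Icc 1 K) (zipfP K) (fun i => -log (harmonicC K) - log i) := by
        refine congrArg₂ (· - ·) (sum_congr rfl ?_) (congrArg (· ^ 2) (sum_congr rfl ?_)) <;>
          intro i hi <;> rw [hlog i hi]
    _ = weightedVariance (Icc 1 K) (zipfP K) (fun i => log i) :=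
        weightedVariance_const_sub (sum_zipfP hK) _ _
    _ = _ := by simp only [weightedVariance, sum_zipfP_mul, logPowHarmonic, pow_one]

/-- For the Zipf distribution, `σ_K² ∼ (ln K)²/12` as `K → ∞`. -/
theorem zipf_variance_asymptotics :
    Tendsto (fun K : ℕ => zipfVar K / (Real.log (K : ℝ)) ^ 2) atTop (nhds (1 / 12)) := by
  have hC : Tendsto (fun K : ℕ => harmonicC K / log K) atTop (𝓝 1) := by
    simpa [← harmonicC_eq_logPowHarmonic_zero] using tendsto_logPowHarmonic_div_log_pow 0
  have h1 := tendsto_logPowHarmonic_div_log_pow 1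
  have h2 := tendsto_logPowHarmonic_div_log_pow 2
  have hlim := (h2.div hC one_ne_zero).sub ((h1.div hC one_ne_zero).pow 2)
  norm_num at hlim
  refine hlim.congr' ?_
  filter_upwards [eventually_gt_atTop 1] with K hK
  have : log K ≠ 0 := (log_pos (by exact_mod_cast hK)).ne'
  have : harmonicC K ≠ 0 := (harmonicC_pos hK.le).ne'
  rw [zipfVar_eq_logPowHarmonic hK.le]
  field_simp
end

section
/- For each integer $K\ge 2$, let $C_K=\sum_{i=1}^{K}\frac{1}{i}$ and consider the Zipf distribution $p_K(i)=(C_K i)^{-1}$ for $1\le i\le K$. Then Shannon's entropy $H_K=-\sum_{i=1}^{K}p_K(i)\ln p_K(i)$ satisfies $H_K \sim \frac{1}{2}\ln K$ as $K\to\infty$, i.e. $\lim_{K\to\infty} H_K/\ln K = 1/2$. -/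
/-! Since `p_K(i) = 1 / (C_K i)`, the entropy splits as `H_K = ln C_K + S_K / C_K` with
`S_K = ∑_{i ≤ K} ln i / i`. The harmonic number satisfies `C_K ~ ln K`, so `ln C_K = o(ln K)`;
comparing `S_K` with `∫ ln x / x dx = (ln x)² / 2` (the integrand decreases for `x ≥ e`) gives
`S_K ~ (ln K)² / 2`. Hence `H_K ~ (ln K)² / (2 ln K) = (ln K) / 2`. -/

open Filter

/-- Shannon's entropy `H_K = −∑_i p_K(i) ln p_K(i)` of the Zipf distribution. -/
noncomputable def zipfEntropy (K : ℕ) : ℝ :=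
  -∑ i ∈ Finset.Icc 1 K, zipfP K i * Real.log (zipfP K i)

open Asymptotics Real Finset

lemma tendsto_log_natCast_atTop : Tendsto (fun K : ℕ => log K) atTop atTop :=
  tendsto_log_atTop.comp tendsto_natCast_atTop_atTop

lemma isEquivalent_of_sub_isBigO_one {α : Type*} {l : Filter α} {u v : α → ℝ}
    (huv : (u - v) =O[l] fun _ => (1 : ℝ)) (hv : Tendsto v l atTop) : u ~[l] v :=
  huv.trans_isLittleO <| (isLittleO_one_left_iff ℝ).2 <| tendsto_norm_atTop_atTop.comp hv

section AntitoneSum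

variable {f : ℝ → ℝ} {a b : ℕ}

lemma AntitoneOn.integral_add_le_sum_Icc (hab : a ≤ b) (hf : AntitoneOn f (Set.Icc a b)) :
    (∫ x in a..b, f x) + f b ≤ ∑ i ∈ Icc a b, f i := by
  rw [← sum_Ico_add_eq_sum_Icc hab]
  gcongr
  exact hf.integral_le_sum_Ico hab

lemma AntitoneOn.sum_Icc_le_add_integral (hab : a ≤ b) (hf : AntitoneOn f (Set.Icc a b)) :
    ∑ i ∈ Icc a b, f i ≤ f a + ∫ x in a..b, f x := by
  rw [← add_sum_Ioc_eq_sum_Icc hab, ← Ico_add_one_add_one_eq_Ioc, ← sum_Ico_add']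
  gcongr
  exact_mod_cast hf.sum_le_integral_Ico hab

lemma AntitoneOn.sum_Icc_sub_integral_isBigO_one (hf : AntitoneOn f (Set.Ici a))
    (hf_nonneg : ∀ x, (a : ℝ) ≤ x → 0 ≤ f x) :
    (fun b : ℕ => ∑ i ∈ Icc a b, f i - ∫ x in a..b, f x) =O[atTop] fun _ => (1 : ℝ) := by
  refine IsBigO.of_bound (f a) ?_
  filter_upwards [eventually_ge_atTop a] with b hab
  have hab' : (a : ℝ) ≤ b := by exact_mod_cast hab
  have hf' : AntitoneOn f (Set.Icc a b) := hf.mono Set.Icc_subset_Ici_self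
  have lower := hf'.integral_add_le_sum_Icc hab
  have upper := hf'.sum_Icc_le_add_integral hab
  have hfb := hf_nonneg b hab'
  rw [norm_one, mul_one, Real.norm_eq_abs, abs_le]
  constructor <;> linarith

end AntitoneSum

lemma hasDerivAt_log_sq_div_two {x : ℝ} (hx : x ≠ 0) :
    HasDerivAt (fun x => log x ^ 2 / 2) (log x / x) x :=
  (((hasDerivAt_log hx).pow 2).div_const 2).congr_deriv (by push_cast; ring)

lemma integral_log_div_self {a b : ℝ} (ha : 0 < a) (hab : a ≤ b) :
    ∫ x in a..b, log x / x = log b ^ 2 / 2 - log a ^ 2 / 2 := by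
  have hpos : ∀ x ∈ Set.uIcc a b, x ≠ 0 := fun x hx =>
    (ha.trans_le (Set.uIcc_of_le hab ▸ hx).1).ne'
  refine intervalIntegral.integral_eq_sub_of_hasDerivAt
    (fun x hx => hasDerivAt_log_sq_div_two (hpos x hx)) ?_
  exact ContinuousOn.intervalIntegrable fun x hx =>
    ((continuousAt_log (hpos x hx)).div continuousAt_id (hpos x hx)).continuousWithinAt

lemma log_div_self_antitoneOn_Ici_three : AntitoneOn (fun x : ℝ => log x / x) (Set.Ici 3) :=
  log_div_self_antitoneOn.mono <| Set.Ici_subset_Ici.2 <|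
    (exp_one_lt_d9.trans (by norm_num)).le

lemma sum_log_div_self_isEquivalent :
    (fun K : ℕ => ∑ i ∈ Icc 1 K, log i / i) ~[atTop] fun K => log K ^ 2 / 2 := by
  have hnonneg : ∀ x : ℝ, ((3 : ℕ) : ℝ) ≤ x → 0 ≤ log x / x := fun x hx => by
    rw [Nat.cast_ofNat] at hx
    exact div_nonneg (log_nonneg (by linarith)) (by linarith)
  have hbounded := log_div_self_antitoneOn_Ici_three.sum_Icc_sub_integral_isBigO_one hnonneg
  refine isEquivalent_of_sub_isBigO_one ?_ <|
    ((tendsto_pow_atTop two_ne_zero).comp tendsto_log_natCast_atTop).atTop_div_const two_pos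
  refine (hbounded.add (isBigO_const_one ℝ (log 2 / 2 - log 3 ^ 2 / 2) atTop)).congr' ?_ .rfl
  filter_upwards [eventually_ge_atTop 3] with K hK
  have h3K : (3 : ℝ) ≤ K := by exact_mod_cast hK
  have hsplit : ∑ i ∈ Icc 1 K, log i / i = log 2 / 2 + ∑ i ∈ Icc 3 K, log i / i := by
    rw [← Ico_add_one_right_eq_Icc 1 K, ← sum_Ico_consecutive _ (by norm_num : 1 ≤ 3) (by omega),
      Ico_add_one_right_eq_Icc]
    simp [sum_Ico_succ_top]
  rw [Nat.cast_ofNat, integral_log_div_self three_pos h3K, Pi.sub_apply, hsplit]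
  ring

lemma harmonicC_eq_harmonic (K : ℕ) : harmonicC K = harmonic K := by
  simp [harmonicC, harmonic_eq_sum_Icc, one_div]

lemma harmonicC_isEquivalent_log : (fun K => harmonicC K) ~[atTop] fun K => log K := by
  refine isEquivalent_of_sub_isBigO_one ?_ tendsto_log_natCast_atTop
  simp only [harmonicC_eq_harmonic]
  exact tendsto_harmonic_sub_log.isBigO_one ℝ

lemma log_harmonicC_isLittleO_log :
    (fun K => log (harmonicC K)) =o[atTop] fun K => log K :=
  (harmonicC_isEquivalent_log.log tendsto_log_natCast_atTop).trans_isLittleO <|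
    isLittleO_log_id_atTop.comp_tendsto tendsto_log_natCast_atTop

lemma zipfEntropy_eq (K : ℕ) :
    zipfEntropy K = log (harmonicC K) + (∑ i ∈ Icc 1 K, log i / i) / harmonicC K := by
  rcases K.eq_zero_or_pos with rfl | hK
  · simp [zipfEntropy, harmonicC]
  have hC : harmonicC K ≠ 0 := by
    rw [harmonicC_eq_harmonic]; exact_mod_cast (harmonic_pos hK.ne').ne'
  have hterm : ∀ i ∈ Icc 1 K, -(zipfP K i * log (zipfP K i)) =
      log (harmonicC K) * (1 / i) / harmonicC K + log i / i / harmonicC K := by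
    intro i hi
    have hi : (i : ℝ) ≠ 0 := by have := (mem_Icc.1 hi).1; positivity
    rw [zipfP, log_inv, log_mul hC hi]
    field_simp
  rw [zipfEntropy, ← sum_neg_distrib, sum_congr rfl hterm, sum_add_distrib, ← sum_div, ← sum_div,
    ← mul_sum, ← harmonicC, mul_div_cancel_right₀ _ hC]

/-- For the Zipf distribution, `H_K ∼ (ln K)/2` as `K → ∞`. -/
theorem zipf_entropy_asymptotics :
    Tendsto (fun K : ℕ => zipfEntropy K / Real.log (K : ℝ)) atTop (nhds (1 / 2)) := by
  have hquot : (fun K : ℕ => (∑ i ∈ Icc 1 K, log i / i) / harmonicC K / log K) ~[atTop]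
      fun _ => (1 / 2 : ℝ) :=
    ((sum_log_div_self_isEquivalent.div harmonicC_isEquivalent_log).div .refl).congr_right <| by
      filter_upwards [tendsto_log_natCast_atTop.eventually_ne_atTop 0] with K hK
      simp only [Pi.div_apply]
      field_simp
  simpa [zipfEntropy_eq, add_div] using
    log_harmonicC_isLittleO_log.tendsto_div_nhds_zero.add hquot.tendsto_const
end
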